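/- arXiv:1704.00820 — 2 statements merged into one kernel-verified Lean document; each statement's English description precedes it below -/
import Mathlib

section
/- Let S, X be fixed discrete finite random variables with I(S;X) > 0 and let G_I(t) = inf{I(S;Y) : S → X → Y, I(X;Y) ≥ t}. Then for every 0 < λ ≤ 1 and 0 < t ≤ H(X), G_I(λt)/（λt) ≤ G_I(t)/t; i.e., t ↦ G_I(t)/t is non-decreasing on (0, H(X)]. -/
open Finset Real

/-- The privacy funnel function `G_I(t)`: the infimum of `I(S;Y)` over all
channels `p_{Y|X}` with finite output alphabet such that `S → X → Y` and
`I(X;Y) ≥ t`, for the joint distribution given by `p_X = pX` and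
`p_{S|X} = c`.  Mutual informations are in bits. -/
noncomputable def privacyFunnel {σ α : Type*} [Fintype σ] [Fintype α]
    (pX : α → ℝ) (c : α → σ → ℝ) (t : ℝ) : ℝ :=
  sInf { r : ℝ | ∃ k : ℕ, ∃ W : α → Fin k → ℝ,
    (∀ x y, 0 ≤ W x y) ∧ (∀ x, ∑ y, W x y = 1) ∧
    (∑ x, ∑ y, pX x * W x y *
        Real.logb 2 ((pX x * W x y) / (pX x * ∑ x', pX x' * W x' y))) ≥ t ∧
    r = ∑ s, ∑ y, (∑ x, pX x * c x s * W x y) *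
        Real.logb 2 ((∑ x, pX x * c x s * W x y) /
          ((∑ x, pX x * c x s) * ∑ x', pX x' * W x' y)) }

/-!
The erasure channel, which passes `Y` through with probability `λ` and otherwise outputs a fresh
symbol, scales both `I(X;Y)` and `I(S;Y)` by `λ`. So `λ • {feasible leakages at t}` consists of
feasible leakages at `λ t`, whence `G_I(λt) ≤ λ G_I(t)`. This needs the leakages to be bounded
below (Gibbs' inequality) and the constraint set at `t` to be nonempty (the channel `Y = X`).
-/

namespace PrivacyFunnel

open scoped Pointwise

lemma sub_div_log_two_le_mul_logb_div {a b : ℝ} (ha : 0 ≤ a) (hb : 0 ≤ b)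
    (hab : b = 0 → a = 0) : (a - b) / log 2 ≤ a * logb 2 (a / b) := by
  obtain rfl | ha := ha.eq_or_lt
  · simpa using div_nonpos_of_nonpos_of_nonneg (neg_nonpos.2 hb) (log_nonneg one_le_two)
  have hb : 0 < b := hb.lt_of_ne fun h => ha.ne' (hab h.symm)
  have hlog : 1 - (a / b)⁻¹ ≤ log (a / b) := one_sub_inv_le_log_of_pos (by positivity)
  rw [logb, ← mul_div_assoc, div_le_div_iff_of_pos_right (log_pos one_lt_two)]
  calc a - b = a * (1 - (a / b)⁻¹) := by field_simp
    _ ≤ a * log (a / b) := mul_le_mul_of_nonneg_left hlog ha.le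

lemma sum_mul_logb_div_nonneg {ι : Type*} (s : Finset ι) {A B : ι → ℝ}
    (hA : ∀ i ∈ s, 0 ≤ A i) (hB : ∀ i ∈ s, 0 ≤ B i) (hAB : ∀ i ∈ s, B i = 0 → A i = 0)
    (hsum : ∑ i ∈ s, B i ≤ ∑ i ∈ s, A i) :
    0 ≤ ∑ i ∈ s, A i * logb 2 (A i / B i) :=
  calc 0 ≤ (∑ i ∈ s, A i - ∑ i ∈ s, B i) / log 2 :=
        div_nonneg (sub_nonneg.2 hsum) (log_nonneg one_le_two)
    _ = ∑ i ∈ s, (A i - B i) / log 2 := by rw [← sum_sub_distrib, sum_div]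
    _ ≤ _ := sum_le_sum fun i hi =>
        sub_div_log_two_le_mul_logb_div (hA i hi) (hB i hi) (hAB i hi)

lemma mul_logb_div_self (a : ℝ) : a * logb 2 (a / a) = 0 := by
  simp [logb]

lemma mul_logb_mul_div_mul_left (l a b : ℝ) :
    l * a * logb 2 (l * a / (l * b)) = l * (a * logb 2 (a / b)) := by
  obtain rfl | hl := eq_or_ne l 0
  · simp
  · rw [mul_div_mul_left _ _ hl, mul_assoc]

lemma sum_mul_mul_left {ι : Type*} (s : Finset ι) (l : ℝ) (f g : ι → ℝ) :
    ∑ i ∈ s, f i * (l * g i) = l * ∑ i ∈ s, f i * g i := by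
  rw [mul_sum]; exact sum_congr rfl fun i _ => mul_left_comm _ _ _

variable {σ α β : Type*} [Fintype σ] [Fintype α] [Fintype β]

noncomputable def mutualInfoXY (pX : α → ℝ) (W : α → β → ℝ) : ℝ :=
  ∑ x, ∑ y, pX x * W x y * logb 2 ((pX x * W x y) / (pX x * ∑ x', pX x' * W x' y))

noncomputable def mutualInfoSY (pX : α → ℝ) (c : α → σ → ℝ) (W : α → β → ℝ) : ℝ :=
  ∑ s, ∑ y, (∑ x, pX x * c x s * W x y) *
    logb 2 ((∑ x, pX x * c x s * W x y) / ((∑ x, pX x * c x s) * ∑ x', pX x' * W x' y))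

def feasibleLeakages (pX : α → ℝ) (c : α → σ → ℝ) (t : ℝ) : Set ℝ :=
  { r | ∃ k : ℕ, ∃ W : α → Fin k → ℝ, (∀ x y, 0 ≤ W x y) ∧ (∀ x, ∑ y, W x y = 1) ∧
    t ≤ mutualInfoXY pX W ∧ r = mutualInfoSY pX c W }

lemma privacyFunnel_eq_sInf (pX : α → ℝ) (c : α → σ → ℝ) (t : ℝ) :
    privacyFunnel pX c t = sInf (feasibleLeakages pX c t) := rfl

lemma mutualInfoXY_comp_equiv {γ : Type*} [Fintype γ] (pX : α → ℝ) (W : α → β → ℝ)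
    (e : γ ≃ β) : mutualInfoXY pX (fun x z => W x (e z)) = mutualInfoXY pX W :=
  sum_congr rfl fun x _ =>
    e.sum_comp fun y => pX x * W x y * logb 2 ((pX x * W x y) / (pX x * ∑ x', pX x' * W x' y))

lemma mutualInfoSY_comp_equiv {γ : Type*} [Fintype γ] (pX : α → ℝ) (c : α → σ → ℝ)
    (W : α → β → ℝ) (e : γ ≃ β) :
    mutualInfoSY pX c (fun x z => W x (e z)) = mutualInfoSY pX c W :=
  sum_congr rfl fun s _ => e.sum_comp fun y => (∑ x, pX x * c x s * W x y) *
    logb 2 ((∑ x, pX x * c x s * W x y) / ((∑ x, pX x * c x s) * ∑ x', pX x' * W x' y))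

lemma mutualInfoSY_mem_feasibleLeakages (pX : α → ℝ) (c : α → σ → ℝ) {t : ℝ}
    {W : α → β → ℝ} (hW0 : ∀ x y, 0 ≤ W x y) (hW1 : ∀ x, ∑ y, W x y = 1)
    (ht : t ≤ mutualInfoXY pX W) : mutualInfoSY pX c W ∈ feasibleLeakages pX c t := by
  set e := (Fintype.equivFin β).symm
  refine ⟨_, fun x z => W x (e z), fun x z => hW0 x (e z), fun x => ?_, ?_,
    (mutualInfoSY_comp_equiv pX c W e).symm⟩
  · rw [e.sum_comp (W x), hW1]
  · rwa [mutualInfoXY_comp_equiv]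

lemma mutualInfoSY_nonneg {pX : α → ℝ} (hpX0 : ∀ x, 0 ≤ pX x) (hpX1 : ∑ x, pX x = 1)
    {c : α → σ → ℝ} (hc0 : ∀ x s, 0 ≤ c x s) (hc1 : ∀ x, ∑ s, c x s = 1)
    {W : α → β → ℝ} (hW0 : ∀ x y, 0 ≤ W x y) (hW1 : ∀ x, ∑ y, W x y = 1) :
    0 ≤ mutualInfoSY pX c W := by
  have hP0 (s : σ) : 0 ≤ ∑ x, pX x * c x s := sum_nonneg fun x _ => mul_nonneg (hpX0 x) (hc0 x s)
  have hQ0 (y : β) : 0 ≤ ∑ x, pX x * W x y := sum_nonneg fun x _ => mul_nonneg (hpX0 x) (hW0 x y)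
  have hJ0 (s : σ) (y : β) : 0 ≤ ∑ x, pX x * c x s * W x y :=
    sum_nonneg fun x _ => mul_nonneg (mul_nonneg (hpX0 x) (hc0 x s)) (hW0 x y)
  have hsumP : ∑ s, ∑ x, pX x * c x s = 1 := by
    rw [sum_comm]; simp [← mul_sum, hc1, hpX1]
  have hsumQ : ∑ y, ∑ x, pX x * W x y = 1 := by
    rw [sum_comm]; simp [← mul_sum, hW1, hpX1]
  have hsumJ : ∑ s, ∑ y, ∑ x, pX x * c x s * W x y = 1 := by
    calc ∑ s, ∑ y, ∑ x, pX x * c x s * W x y = ∑ s, ∑ x, pX x * c x s * ∑ y, W x y := by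
          simp_rw [mul_sum]; exact sum_congr rfl fun s _ => sum_comm
      _ = 1 := by simp [hW1, hsumP]
  -- Gibbs' inequality for the joint law of `(S, Y)` against the product of its marginals.
  rw [mutualInfoSY, ← Fintype.sum_prod_type']
  refine sum_mul_logb_div_nonneg _ (fun p _ => hJ0 p.1 p.2)
    (fun p _ => mul_nonneg (hP0 p.1) (hQ0 p.2)) (fun p _ hp => ?_) ?_
  · rcases mul_eq_zero.1 hp with hP | hQ
    · rw [sum_eq_zero_iff_of_nonneg fun x _ => mul_nonneg (hpX0 x) (hc0 x p.1)] at hP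
      simp [hP]
    · rw [sum_eq_zero_iff_of_nonneg fun x _ => mul_nonneg (hpX0 x) (hW0 x p.2)] at hQ
      exact sum_eq_zero fun x hx => by rw [mul_right_comm, hQ x hx, zero_mul]
  · simp only [Fintype.sum_prod_type]
    rw [← sum_mul_sum, hsumP, hsumQ, hsumJ, one_mul]

lemma mutualInfoXY_id [DecidableEq α] (pX : α → ℝ) :
    mutualInfoXY pX (fun x y : α => if x = y then 1 else 0) = -∑ x, pX x * logb 2 (pX x) := by
  simp [mutualInfoXY]

/-- The channel that outputs `none` (an erasure) with probability `1 - lam`, and `some (W x)`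
otherwise. -/
def erasure (lam : ℝ) (W : α → β → ℝ) (x : α) : Option β → ℝ :=
  fun o => o.elim (1 - lam) fun y => lam * W x y

lemma mutualInfoXY_erasure {pX : α → ℝ} (hpX1 : ∑ x, pX x = 1) (lam : ℝ) (W : α → β → ℝ) :
    mutualInfoXY pX (erasure lam W) = lam * mutualInfoXY pX W := by
  simp only [mutualInfoXY, erasure, Fintype.sum_option, Option.elim, sum_mul_mul_left,
    ← sum_mul, hpX1, one_mul, mul_logb_div_self, zero_add]
  rw [mul_sum]
  refine sum_congr rfl fun x _ => ?_
  rw [mul_sum]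
  refine sum_congr rfl fun y _ => ?_
  rw [mul_left_comm (pX x) lam, mul_left_comm (pX x) lam, mul_logb_mul_div_mul_left]

lemma mutualInfoSY_erasure {pX : α → ℝ} (hpX1 : ∑ x, pX x = 1) (c : α → σ → ℝ) (lam : ℝ)
    (W : α → β → ℝ) : mutualInfoSY pX c (erasure lam W) = lam * mutualInfoSY pX c W := by
  simp only [mutualInfoSY, erasure, Fintype.sum_option, Option.elim, sum_mul_mul_left,
    ← sum_mul, hpX1, one_mul, mul_logb_div_self, zero_add]
  rw [mul_sum]
  refine sum_congr rfl fun s _ => ?_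
  rw [mul_sum]
  refine sum_congr rfl fun y _ => ?_
  rw [mul_left_comm _ lam, mul_logb_mul_div_mul_left]

lemma smul_feasibleLeakages_subset {pX : α → ℝ} (hpX1 : ∑ x, pX x = 1) (c : α → σ → ℝ)
    {lam : ℝ} (hlam0 : 0 ≤ lam) (hlam1 : lam ≤ 1) (t : ℝ) :
    lam • feasibleLeakages pX c t ⊆ feasibleLeakages pX c (lam * t) := by
  rintro _ ⟨_, ⟨k, W, hW0, hW1, ht, rfl⟩, rfl⟩
  change lam * mutualInfoSY pX c W ∈ _
  rw [← mutualInfoSY_erasure hpX1 c lam W]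
  refine mutualInfoSY_mem_feasibleLeakages pX c (fun x o => ?_) (fun x => ?_) ?_
  · cases o with
    | none => exact sub_nonneg.2 hlam1
    | some y => exact mul_nonneg hlam0 (hW0 x y)
  · simp [erasure, ← mul_sum, hW1]
  · rw [mutualInfoXY_erasure hpX1]
    exact mul_le_mul_of_nonneg_left ht hlam0

lemma feasibleLeakages_nonempty {pX : α → ℝ} (c : α → σ → ℝ) {t : ℝ}
    (htH : t ≤ -∑ x, pX x * logb 2 (pX x)) : (feasibleLeakages pX c t).Nonempty := by
  classical
  exact ⟨_, mutualInfoSY_mem_feasibleLeakages pX c (W := fun x y : α => if x = y then 1 else 0)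
    (fun x y => by split_ifs <;> norm_num) (fun x => by simp) (by rwa [mutualInfoXY_id])⟩

lemma feasibleLeakages_bddBelow {pX : α → ℝ} (hpX0 : ∀ x, 0 ≤ pX x) (hpX1 : ∑ x, pX x = 1)
    {c : α → σ → ℝ} (hc0 : ∀ x s, 0 ≤ c x s) (hc1 : ∀ x, ∑ s, c x s = 1) (t : ℝ) :
    BddBelow (feasibleLeakages pX c t) :=
  ⟨0, by
    rintro _ ⟨k, W, hW0, hW1, -, rfl⟩
    exact mutualInfoSY_nonneg hpX0 hpX1 hc0 hc1 hW0 hW1⟩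

lemma privacyFunnel_mul_le {pX : α → ℝ} (hpX0 : ∀ x, 0 ≤ pX x) (hpX1 : ∑ x, pX x = 1)
    {c : α → σ → ℝ} (hc0 : ∀ x s, 0 ≤ c x s) (hc1 : ∀ x, ∑ s, c x s = 1)
    {lam : ℝ} (hlam0 : 0 ≤ lam) (hlam1 : lam ≤ 1) {t : ℝ}
    (htH : t ≤ -∑ x, pX x * logb 2 (pX x)) :
    privacyFunnel pX c (lam * t) ≤ lam * privacyFunnel pX c t := by
  rw [privacyFunnel_eq_sInf, privacyFunnel_eq_sInf]
  calc sInf (feasibleLeakages pX c (lam * t)) ≤ sInf (lam • feasibleLeakages pX c t) :=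
        csInf_le_csInf (feasibleLeakages_bddBelow hpX0 hpX1 hc0 hc1 _)
          (feasibleLeakages_nonempty c htH).smul_set
          (smul_feasibleLeakages_subset hpX1 c hlam0 hlam1 t)
    _ = lam * sInf (feasibleLeakages pX c t) := Real.sInf_smul_of_nonneg hlam0 _

end PrivacyFunnel

open PrivacyFunnel in
theorem privacyFunnel_ratio_mono_general {σ α : Type*} [Fintype σ] [Fintype α]
    (pX : α → ℝ) (hpX : ∀ x, 0 < pX x) (hpX1 : ∑ x, pX x = 1)
    (c : α → σ → ℝ) (hc0 : ∀ x s, 0 ≤ c x s) (hc1 : ∀ x, ∑ s, c x s = 1)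
    (lam t : ℝ) (hlam0 : 0 < lam) (hlam1 : lam ≤ 1)
    (ht0 : 0 < t) (htH : t ≤ -∑ x, pX x * Real.logb 2 (pX x)) :
    privacyFunnel pX c (lam * t) / (lam * t) ≤ privacyFunnel pX c t / t :=
  calc privacyFunnel pX c (lam * t) / (lam * t)
      ≤ lam * privacyFunnel pX c t / (lam * t) := by
        gcongr
        exact privacyFunnel_mul_le (fun x => (hpX x).le) hpX1 hc0 hc1 hlam0.le hlam1 htH
    _ = privacyFunnel pX c t / t := mul_div_mul_left _ _ hlam0.ne'

/-- `t ↦ G_I(t)/t` is non-decreasing on `(0, H(X)]`: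
`G_I(λt)/(λt) ≤ G_I(t)/t` for `0 < λ ≤ 1` and `0 < t ≤ H(X)`. -/
theorem privacyFunnel_ratio_mono {σ α : Type*} [Fintype σ] [Fintype α]
    (pX : α → ℝ) (hpX : ∀ x, 0 < pX x) (hpX1 : ∑ x, pX x = 1)
    (c : α → σ → ℝ) (hc0 : ∀ x s, 0 ≤ c x s) (hc1 : ∀ x, ∑ s, c x s = 1)
    (hISX : 0 < ∑ x, ∑ s, pX x * c x s *
        Real.logb 2 ((pX x * c x s) / (pX x * ∑ x', pX x' * c x' s)))
    (lam t : ℝ) (hlam0 : 0 < lam) (hlam1 : lam ≤ 1)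
    (ht0 : 0 < t) (htH : t ≤ -∑ x, pX x * Real.logb 2 (pX x)) :
    privacyFunnel pX c (lam * t) / (lam * t) ≤ privacyFunnel pX c t / t :=
  privacyFunnel_ratio_mono_general pX hpX hpX1 c hc0 hc1 lam t hlam0 hlam1 ht0 htH
end

section
/- Let S, X be discrete finite random variables. For all t with 0 ≤ t ≤ H(X), the privacy funnel function G_I(t) = inf{I(S;Y) : S → X → Y, I(X;Y) ≥ t} satisfies max{t − H(X|S), 0} ≤ G_I(t) ≤ t·I(X;S)/H(X). -/
open Finset Real


/-- Gibbs' inequality variant: `∑ a_i logb 2 (a_i / b_i) ≥ 0`. -/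
lemma gibbs_aux {ι : Type*} [Fintype ι] (a b : ι → ℝ) (ha : ∀ i, 0 ≤ a i)
    (hb : ∀ i, 0 ≤ b i) (hab : ∀ i, 0 < a i → 0 < b i)
    (hsum : ∑ i, b i ≤ ∑ i, a i) :
    0 ≤ ∑ i, a i * Real.logb 2 (a i / b i) := by
  have hlog2 : (0:ℝ) < Real.log 2 := Real.log_pos (by norm_num)
  have key : ∀ i, (a i - b i) / Real.log 2 ≤ a i * Real.logb 2 (a i / b i) := by
    intro i
    rcases eq_or_lt_of_le (ha i) with h0 | hpos
    · rw [← h0]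
      simp only [zero_mul, zero_sub]
      apply div_nonpos_of_nonpos_of_nonneg (by linarith [hb i]) hlog2.le
    · have hbpos := hab i hpos
      have h1 : a i * Real.log (b i / a i) ≤ b i - a i := by
        calc a i * Real.log (b i / a i) ≤ a i * (b i / a i - 1) := by
              apply mul_le_mul_of_nonneg_left
                (Real.log_le_sub_one_of_pos (by positivity)) hpos.le
          _ = b i - a i := by field_simp
      have h2 : Real.log (b i / a i) = - Real.log (a i / b i) := by
        rw [← Real.log_inv]; congr 1; rw [inv_div]
      rw [h2] at h1
      rw [Real.logb, ← mul_div_assoc, div_le_div_iff_of_pos_right hlog2]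
      nlinarith
  calc (0:ℝ) = (∑ i, b i - ∑ i, b i) / Real.log 2 := by simp
    _ ≤ (∑ i, a i - ∑ i, b i) / Real.log 2 := by
        gcongr
    _ = ∑ i, (a i - b i) / Real.log 2 := by
        rw [← Finset.sum_sub_distrib, Finset.sum_div]
    _ ≤ _ := Finset.sum_le_sum fun i _ => key i


lemma term_id (px cs w psy ps q : ℝ) (hpx : 0 < px) (hcs : 0 ≤ cs) (hw : 0 ≤ w)
    (hpsy : px * cs * w ≤ psy) (hps : px * cs ≤ ps) (hq : px * w ≤ q) :
    px * cs * w * Real.logb 2 (psy / (ps * q))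
      - px * cs * w * Real.logb 2 ((px * cs) / ps)
      - px * cs * w * Real.logb 2 ((px * w) / (px * q))
    = px * cs * w * Real.logb 2 (psy / (px * cs * w)) := by
  rcases eq_or_lt_of_le hcs with h0 | hcs
  · simp [← h0]
  rcases eq_or_lt_of_le hw with h0 | hw
  · simp [← h0]
  have hp : 0 < px * cs * w := by positivity
  have hpsy' : 0 < psy := lt_of_lt_of_le hp hpsy
  have hps' : 0 < ps := lt_of_lt_of_le (by positivity) hps
  have hq' : 0 < q := lt_of_lt_of_le (by positivity) hq
  rw [Real.logb_div hpsy'.ne' (by positivity),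
    Real.logb_mul hps'.ne' hq'.ne',
    Real.logb_div (by positivity) hps'.ne',
    Real.logb_div (by positivity) (by positivity),
    Real.logb_div hpsy'.ne' hp.ne',
    Real.logb_mul (ne_of_gt hpx) (ne_of_gt hcs),
    Real.logb_mul (ne_of_gt hpx) (ne_of_gt hw),
    Real.logb_mul (ne_of_gt hpx) (ne_of_gt hq'),
    Real.logb_mul (by positivity : (0:ℝ) < px * cs).ne' (ne_of_gt hw),
    Real.logb_mul (ne_of_gt hpx) (ne_of_gt hcs)]
  ring

lemma exists_pos_of_sum_pos {ι : Type*} [Fintype ι] (f : ι → ℝ)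
    (h : 0 < ∑ i, f i) : ∃ i, 0 < f i := by
  by_contra hc
  push_neg at hc
  have : ∑ i, f i ≤ 0 := Finset.sum_nonpos fun i _ => hc i
  linarith

section main
variable {σ α : Type*} [Fintype σ] [Fintype α]

lemma ISY_nonneg (pX : α → ℝ) (hpX : ∀ x, 0 < pX x) (hpX1 : ∑ x, pX x = 1)
    (c : α → σ → ℝ) (hc0 : ∀ x s, 0 ≤ c x s) (hc1 : ∀ x, ∑ s, c x s = 1)
    {k : ℕ} (W : α → Fin k → ℝ) (hW0 : ∀ x y, 0 ≤ W x y)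
    (hW1 : ∀ x, ∑ y, W x y = 1) :
    0 ≤ ∑ s, ∑ y, (∑ x, pX x * c x s * W x y) *
        Real.logb 2 ((∑ x, pX x * c x s * W x y) /
          ((∑ x, pX x * c x s) * ∑ x', pX x' * W x' y)) := by
  have ha : ∀ s y, (0:ℝ) ≤ ∑ x, pX x * c x s * W x y := fun s y =>
    Finset.sum_nonneg fun x _ =>
      mul_nonneg (mul_nonneg (hpX x).le (hc0 x s)) (hW0 x y)
  have hb : ∀ (s : σ) (y : Fin k),
      (0:ℝ) ≤ (∑ x, pX x * c x s) * ∑ x', pX x' * W x' y := fun s y => by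
    have h1 : (0:ℝ) ≤ ∑ x, pX x * c x s :=
      Finset.sum_nonneg fun x _ => mul_nonneg (hpX x).le (hc0 x s)
    have h2 : (0:ℝ) ≤ ∑ x', pX x' * W x' y :=
      Finset.sum_nonneg fun x _ => mul_nonneg (hpX x).le (hW0 x y)
    exact mul_nonneg h1 h2
  have hab : ∀ (s : σ) (y : Fin k), 0 < ∑ x, pX x * c x s * W x y →
      0 < (∑ x, pX x * c x s) * ∑ x', pX x' * W x' y := by
    intro s y h
    obtain ⟨x, hx⟩ := exists_pos_of_sum_pos _ h
    have hcs : 0 < c x s := by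
      rcases (hc0 x s).lt_or_eq with h' | h'
      · exact h'
      · exfalso; rw [← h'] at hx; simp at hx
    have hw : 0 < W x y := by
      rcases (hW0 x y).lt_or_eq with h' | h'
      · exact h'
      · exfalso; rw [← h'] at hx; simp at hx
    have h1 : pX x * c x s ≤ ∑ x', pX x' * c x' s :=
      Finset.single_le_sum (f := fun x' => pX x' * c x' s)
        (fun x' _ => mul_nonneg (hpX x').le (hc0 x' s)) (Finset.mem_univ x)
    have h2 : pX x * W x y ≤ ∑ x', pX x' * W x' y :=
      Finset.single_le_sum (f := fun x' => pX x' * W x' y)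
        (fun x' _ => mul_nonneg (hpX x').le (hW0 x' y)) (Finset.mem_univ x)
    have hA : 0 < pX x * c x s := mul_pos (hpX x) hcs
    have hB : 0 < pX x * W x y := mul_pos (hpX x) hw
    nlinarith
  have hasum : ∑ s, ∑ y, (∑ x, pX x * c x s * W x y) = 1 := by
    have : ∀ s, ∑ y, ∑ x, pX x * c x s * W x y = ∑ x, pX x * c x s := by
      intro s
      rw [Finset.sum_comm]
      refine Finset.sum_congr rfl fun x _ => ?_
      rw [← Finset.mul_sum, hW1 x, mul_one]
    rw [Finset.sum_congr rfl fun s _ => this s, Finset.sum_comm]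
    rw [Finset.sum_congr rfl fun x (_ : x ∈ univ) => by
      rw [← Finset.mul_sum, hc1 x, mul_one]]
    exact hpX1
  have hbsum : ∑ s, ∑ y, (∑ x, pX x * c x s) * (∑ x', pX x' * W x' y) = 1 := by
    have hq : ∑ y, ∑ x', pX x' * W x' y = 1 := by
      rw [Finset.sum_comm]
      rw [Finset.sum_congr rfl fun x (_ : x ∈ univ) => by
        rw [← Finset.mul_sum, hW1 x, mul_one]]
      exact hpX1
    have hs : ∑ s, ∑ x, pX x * c x s = 1 := by
      rw [Finset.sum_comm]
      rw [Finset.sum_congr rfl fun x (_ : x ∈ univ) => by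
        rw [← Finset.mul_sum, hc1 x, mul_one]]
      exact hpX1
    calc ∑ s, ∑ y, (∑ x, pX x * c x s) * (∑ x', pX x' * W x' y)
        = ∑ s, (∑ x, pX x * c x s) * ∑ y, (∑ x', pX x' * W x' y) := by
          refine Finset.sum_congr rfl fun s _ => ?_
          rw [Finset.mul_sum]
      _ = ∑ s, (∑ x, pX x * c x s) := by
          refine Finset.sum_congr rfl fun s _ => by rw [hq, mul_one]
      _ = 1 := hs
  have := gibbs_aux (ι := σ × Fin k)
    (fun p => ∑ x, pX x * c x p.1 * W x p.2)
    (fun p => (∑ x, pX x * c x p.1) * ∑ x', pX x' * W x' p.2)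
    (fun p => ha p.1 p.2) (fun p => hb p.1 p.2) (fun p => hab p.1 p.2)
    (by rw [Fintype.sum_prod_type, Fintype.sum_prod_type, hasum, hbsum])
  rwa [Fintype.sum_prod_type] at this

end main

section main2
variable {σ α : Type*} [Fintype σ] [Fintype α]

lemma key_lower (pX : α → ℝ) (hpX : ∀ x, 0 < pX x)
    (c : α → σ → ℝ) (hc0 : ∀ x s, 0 ≤ c x s) (hc1 : ∀ x, ∑ s, c x s = 1)
    {k : ℕ} (W : α → Fin k → ℝ) (hW0 : ∀ x y, 0 ≤ W x y)
    (hW1 : ∀ x, ∑ y, W x y = 1) :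
    (∑ x, ∑ y, pX x * W x y *
        Real.logb 2 ((pX x * W x y) / (pX x * ∑ x', pX x' * W x' y)))
    + (∑ s, ∑ x, pX x * c x s *
        Real.logb 2 ((pX x * c x s) / (∑ x', pX x' * c x' s)))
    ≤ ∑ s, ∑ y, (∑ x, pX x * c x s * W x y) *
        Real.logb 2 ((∑ x, pX x * c x s * W x y) /
          ((∑ x, pX x * c x s) * ∑ x', pX x' * W x' y)) := by
  -- rewrite all three as triple sums over s, y, x
  have hA : (∑ s, ∑ y, (∑ x, pX x * c x s * W x y) *
        Real.logb 2 ((∑ x, pX x * c x s * W x y) /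
          ((∑ x, pX x * c x s) * ∑ x', pX x' * W x' y)))
      = ∑ s, ∑ y, ∑ x, pX x * c x s * W x y *
        Real.logb 2 ((∑ x', pX x' * c x' s * W x' y) /
          ((∑ x', pX x' * c x' s) * ∑ x', pX x' * W x' y)) := by
    refine Finset.sum_congr rfl fun s _ => Finset.sum_congr rfl fun y _ => ?_
    rw [Finset.sum_mul]
  have hB : (∑ x, ∑ y, pX x * W x y *
        Real.logb 2 ((pX x * W x y) / (pX x * ∑ x', pX x' * W x' y)))
      = ∑ s, ∑ y, ∑ x, pX x * c x s * W x y *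
        Real.logb 2 ((pX x * W x y) / (pX x * ∑ x', pX x' * W x' y)) := by
    calc (∑ x, ∑ y, pX x * W x y *
          Real.logb 2 ((pX x * W x y) / (pX x * ∑ x', pX x' * W x' y)))
        = ∑ x, ∑ y, ∑ s, pX x * c x s * W x y *
          Real.logb 2 ((pX x * W x y) / (pX x * ∑ x', pX x' * W x' y)) := by
          refine Finset.sum_congr rfl fun x _ => Finset.sum_congr rfl
            fun y _ => ?_
          simp only [show ∀ s : σ, pX x * c x s * W x y *
              Real.logb 2 ((pX x * W x y) / (pX x * ∑ x', pX x' * W x' y))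
              = c x s * (pX x * W x y *
              Real.logb 2 ((pX x * W x y) / (pX x * ∑ x', pX x' * W x' y)))
              from fun s => by ring]
          rw [← Finset.sum_mul, hc1 x, one_mul]
      _ = ∑ x, ∑ s, ∑ y, pX x * c x s * W x y *
          Real.logb 2 ((pX x * W x y) / (pX x * ∑ x', pX x' * W x' y)) :=
          Finset.sum_congr rfl fun x _ => Finset.sum_comm
      _ = ∑ s, ∑ x, ∑ y, pX x * c x s * W x y *
          Real.logb 2 ((pX x * W x y) / (pX x * ∑ x', pX x' * W x' y)) :=
          Finset.sum_comm
      _ = ∑ s, ∑ y, ∑ x, pX x * c x s * W x y *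
          Real.logb 2 ((pX x * W x y) / (pX x * ∑ x', pX x' * W x' y)) :=
          Finset.sum_congr rfl fun s _ => Finset.sum_comm
  have hC : (∑ s, ∑ x, pX x * c x s *
        Real.logb 2 ((pX x * c x s) / (∑ x', pX x' * c x' s)))
      = ∑ s, ∑ y, ∑ x, pX x * c x s * W x y *
        Real.logb 2 ((pX x * c x s) / (∑ x', pX x' * c x' s)) := by
    refine Finset.sum_congr rfl fun s _ => ?_
    calc (∑ x, pX x * c x s *
          Real.logb 2 ((pX x * c x s) / (∑ x', pX x' * c x' s)))
        = ∑ x, ∑ y, pX x * c x s * W x y *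
          Real.logb 2 ((pX x * c x s) / (∑ x', pX x' * c x' s)) := by
          refine Finset.sum_congr rfl fun x _ => ?_
          simp only [show ∀ y : Fin k, pX x * c x s * W x y *
              Real.logb 2 ((pX x * c x s) / (∑ x', pX x' * c x' s))
              = W x y * (pX x * c x s *
              Real.logb 2 ((pX x * c x s) / (∑ x', pX x' * c x' s)))
              from fun y => by ring]
          rw [← Finset.sum_mul, hW1 x, one_mul]
      _ = ∑ y, ∑ x, pX x * c x s * W x y *
          Real.logb 2 ((pX x * c x s) / (∑ x', pX x' * c x' s)) :=
          Finset.sum_comm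
  rw [hA, hB, hC, ← Finset.sum_add_distrib]
  refine Finset.sum_le_sum fun s _ => ?_
  rw [← Finset.sum_add_distrib]
  refine Finset.sum_le_sum fun y _ => ?_
  rw [← Finset.sum_add_distrib]
  refine Finset.sum_le_sum fun x _ => ?_
  have hpsy : pX x * c x s * W x y ≤ ∑ x', pX x' * c x' s * W x' y :=
    Finset.single_le_sum (f := fun x' => pX x' * c x' s * W x' y)
      (fun x' _ => mul_nonneg (mul_nonneg (hpX x').le (hc0 x' s)) (hW0 x' y))
      (Finset.mem_univ x)
  have hps : pX x * c x s ≤ ∑ x', pX x' * c x' s :=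
    Finset.single_le_sum (f := fun x' => pX x' * c x' s)
      (fun x' _ => mul_nonneg (hpX x').le (hc0 x' s)) (Finset.mem_univ x)
  have hq : pX x * W x y ≤ ∑ x', pX x' * W x' y :=
    Finset.single_le_sum (f := fun x' => pX x' * W x' y)
      (fun x' _ => mul_nonneg (hpX x').le (hW0 x' y)) (Finset.mem_univ x)
  have hid := term_id (pX x) (c x s) (W x y) (∑ x', pX x' * c x' s * W x' y)
    (∑ x', pX x' * c x' s) (∑ x', pX x' * W x' y) (hpX x) (hc0 x s)
    (hW0 x y) hpsy hps hq
  have hnn : 0 ≤ pX x * c x s * W x y *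
      Real.logb 2 ((∑ x', pX x' * c x' s * W x' y) / (pX x * c x s * W x y)) := by
    rcases eq_or_lt_of_le (mul_nonneg (mul_nonneg (hpX x).le (hc0 x s))
        (hW0 x y)) with h0 | hpos
    · rw [← h0, zero_mul]
    · exact mul_nonneg hpos.le (Real.logb_nonneg one_lt_two
        ((one_le_div hpos).2 hpsy))
  linarith
end main2


lemma self_term (u : ℝ) : u * Real.logb 2 (u / u) = 0 := by
  rcases eq_or_ne u 0 with h | h
  · simp [h]
  · rw [div_self h, Real.logb_one, mul_zero]

lemma termA (px lam : ℝ) (hpx : 0 < px) :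
    px * lam * Real.logb 2 ((px * lam) / (px * (lam * px)))
      = lam * -(px * Real.logb 2 px) := by
  rcases eq_or_ne lam 0 with h | h
  · simp [h]
  · have h1 : (px * lam) / (px * (lam * px)) = px⁻¹ := by
      field_simp
    rw [h1, Real.logb_inv]; ring

lemma termC (px cs lam ps : ℝ) (hpx : 0 < px) (hcs : 0 ≤ cs)
    (hps : px * cs ≤ ps) :
    (px * cs * lam) * Real.logb 2 ((px * cs * lam) / (ps * (lam * px)))
      = lam * (px * cs * Real.logb 2 ((px * cs) / (px * ps))) := by
  rcases eq_or_ne lam 0 with h | h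
  · simp [h]
  rcases eq_or_lt_of_le hcs with h' | h'
  · simp [← h']
  have hps' : 0 < ps := lt_of_lt_of_le (by positivity) hps
  have h1 : (px * cs * lam) / (ps * (lam * px)) = cs / ps := by
    field_simp
  have h2 : (px * cs) / (px * ps) = cs / ps := by
    rw [mul_div_mul_left _ _ hpx.ne']
  rw [h1, h2]; ring

section wit
variable {σ α : Type*} [Fintype σ] [Fintype α]

lemma witness (pX : α → ℝ) (hpX : ∀ x, 0 < pX x) (hpX1 : ∑ x, pX x = 1)
    (c : α → σ → ℝ) (hc0 : ∀ x s, 0 ≤ c x s)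
    (lam : ℝ) (hl0 : 0 ≤ lam) (hl1 : lam ≤ 1) :
    ∃ k : ℕ, ∃ W : α → Fin k → ℝ,
      (∀ x y, 0 ≤ W x y) ∧ (∀ x, ∑ y, W x y = 1) ∧
      (∑ x, ∑ y, pX x * W x y *
          Real.logb 2 ((pX x * W x y) / (pX x * ∑ x', pX x' * W x' y)))
        = lam * (-∑ x, pX x * Real.logb 2 (pX x)) ∧
      (∑ s, ∑ y, (∑ x, pX x * c x s * W x y) *
          Real.logb 2 ((∑ x, pX x * c x s * W x y) /
            ((∑ x, pX x * c x s) * ∑ x', pX x' * W x' y)))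
        = lam * (∑ x, ∑ s, pX x * c x s *
            Real.logb 2 ((pX x * c x s) / (pX x * ∑ x', pX x' * c x' s))) := by
  classical
  set n := Fintype.card α with hn
  set e : α ≃ Fin n := Fintype.equivFin α with he
  set W : α → Fin (n + 1) → ℝ := fun x y =>
    if y = Fin.castSucc (e x) then lam else if y = Fin.last n then 1 - lam
      else 0 with hWdef
  have hne : ∀ x : α, Fin.castSucc (e x) ≠ Fin.last n :=
    fun x => (Fin.castSucc_lt_last _).ne
  have hWc : ∀ x x' : α, W x' (Fin.castSucc (e x)) = if x = x' then lam else 0 := by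
    intro x x'
    simp only [hWdef, Fin.castSucc_inj, EmbeddingLike.apply_eq_iff_eq,
      if_neg (hne x)]

  have hWl : ∀ x' : α, W x' (Fin.last n) = 1 - lam := by
    intro x'
    simp only [hWdef]
    rw [if_neg (Ne.symm (hne x'))]
    simp
  have hW0 : ∀ x y, 0 ≤ W x y := by
    intro x y
    simp only [hWdef]
    split_ifs <;> linarith
  have hW1 : ∀ x, ∑ y, W x y = 1 := by
    intro x
    rw [Fin.sum_univ_castSucc]
    rw [hWl x]
    have : ∀ i : Fin n, W x (Fin.castSucc i) = if i = e x then lam else 0 := by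
      intro i
      simp only [hWdef, Fin.castSucc_inj, if_neg (Fin.castSucc_lt_last i).ne]
    rw [Finset.sum_congr rfl fun i _ => this i, Finset.sum_ite_eq' univ (e x)
      (fun _ => lam)]
    simp
  -- marginal q at the two kinds of outputs
  have hqc : ∀ x : α, (∑ x', pX x' * W x' (Fin.castSucc (e x))) = lam * pX x := by
    intro x
    rw [Finset.sum_congr rfl fun x' _ => by rw [hWc x x']]
    simp [mul_ite, Finset.sum_ite_eq, mul_comm]
  have hql : (∑ x', pX x' * W x' (Fin.last n)) = 1 - lam := by
    rw [Finset.sum_congr rfl fun x' _ => by rw [hWl x']]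
    rw [← Finset.sum_mul, hpX1, one_mul]
  refine ⟨n + 1, W, hW0, hW1, ?_, ?_⟩
  · -- I(X;Y) = lam * H(X)
    have hx : ∀ x : α, (∑ y, pX x * W x y *
        Real.logb 2 ((pX x * W x y) / (pX x * ∑ x', pX x' * W x' y)))
        = lam * -(pX x * Real.logb 2 (pX x)) := by
      intro x
      rw [Fin.sum_univ_castSucc]
      have hlast : pX x * W x (Fin.last n) *
          Real.logb 2 ((pX x * W x (Fin.last n)) /
            (pX x * ∑ x', pX x' * W x' (Fin.last n))) = 0 := by
        rw [hWl x, hql]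
        exact self_term _
      rw [hlast, add_zero]
      rw [← Equiv.sum_comp e (fun i => pX x * W x (Fin.castSucc i) *
        Real.logb 2 ((pX x * W x (Fin.castSucc i)) /
          (pX x * ∑ x', pX x' * W x' (Fin.castSucc i))))]
      rw [Finset.sum_eq_single_of_mem x (Finset.mem_univ x) ?side]
      · rw [hWc x x, if_pos rfl, hqc x]
        exact termA (pX x) lam (hpX x)
      case side =>
        intro x' _ hx'
        rw [hWc x' x, if_neg hx', mul_zero, zero_mul]
    rw [Finset.sum_congr rfl fun x _ => hx x, ← Finset.mul_sum]
    rw [← Finset.sum_neg_distrib]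
  · -- I(S;Y) = lam * I(X;S)
    have hs : ∀ s : σ, (∑ y, (∑ x, pX x * c x s * W x y) *
        Real.logb 2 ((∑ x, pX x * c x s * W x y) /
          ((∑ x, pX x * c x s) * ∑ x', pX x' * W x' y)))
        = ∑ x, lam * (pX x * c x s *
            Real.logb 2 ((pX x * c x s) / (pX x * ∑ x', pX x' * c x' s))) := by
      intro s
      rw [Fin.sum_univ_castSucc]
      have hAl : (∑ x, pX x * c x s * W x (Fin.last n))
          = (∑ x, pX x * c x s) * (1 - lam) := by
        rw [Finset.sum_congr rfl fun x _ => by rw [hWl x], Finset.sum_mul]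
      have hlast : (∑ x, pX x * c x s * W x (Fin.last n)) *
          Real.logb 2 ((∑ x, pX x * c x s * W x (Fin.last n)) /
            ((∑ x, pX x * c x s) * ∑ x', pX x' * W x' (Fin.last n))) = 0 := by
        rw [hAl, hql]
        exact self_term _
      rw [hlast, add_zero]
      rw [← Equiv.sum_comp e (fun i => (∑ x, pX x * c x s * W x (Fin.castSucc i)) *
        Real.logb 2 ((∑ x, pX x * c x s * W x (Fin.castSucc i)) /
          ((∑ x, pX x * c x s) * ∑ x', pX x' * W x' (Fin.castSucc i))))]
      refine Finset.sum_congr rfl fun x _ => ?_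
      have hA : (∑ x', pX x' * c x' s * W x' (Fin.castSucc (e x)))
          = pX x * c x s * lam := by
        rw [Finset.sum_congr rfl fun x' _ => by rw [hWc x x']]
        simp [mul_ite, Finset.sum_ite_eq]
      rw [hA, hqc x]
      have hps : pX x * c x s ≤ ∑ x', pX x' * c x' s :=
        Finset.single_le_sum (f := fun x' => pX x' * c x' s)
          (fun x' _ => mul_nonneg (hpX x').le (hc0 x' s)) (Finset.mem_univ x)
      rw [termC (pX x) (c x s) lam (∑ x', pX x' * c x' s) (hpX x) (hc0 x s) hps]
    rw [Finset.sum_congr rfl fun s _ => hs s, Finset.sum_comm]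
    simp only [← Finset.mul_sum]
end wit

/-- Bounds on the privacy funnel function: for `0 ≤ t ≤ H(X)`,
`max{t − H(X|S), 0} ≤ G_I(t) ≤ t I(X;S)/H(X)`. -/
theorem privacyFunnel_bounds {σ α : Type*} [Fintype σ] [Fintype α]
    (pX : α → ℝ) (hpX : ∀ x, 0 < pX x) (hpX1 : ∑ x, pX x = 1)
    (c : α → σ → ℝ) (hc0 : ∀ x s, 0 ≤ c x s) (hc1 : ∀ x, ∑ s, c x s = 1)
    (hH : 0 < -∑ x, pX x * Real.logb 2 (pX x))
    (t : ℝ) (ht0 : 0 ≤ t) (htH : t ≤ -∑ x, pX x * Real.logb 2 (pX x)) :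
    max (t - -(∑ s, ∑ x, pX x * c x s *
          Real.logb 2 ((pX x * c x s) / (∑ x', pX x' * c x' s)))) 0 ≤
        privacyFunnel pX c t ∧
      privacyFunnel pX c t ≤
        t * (∑ x, ∑ s, pX x * c x s *
            Real.logb 2 ((pX x * c x s) / (pX x * ∑ x', pX x' * c x' s))) /
          (-∑ x, pX x * Real.logb 2 (pX x)) := by
  have hHne : (-∑ x, pX x * Real.logb 2 (pX x)) ≠ 0 := hH.ne'
  set lam := t / (-∑ x, pX x * Real.logb 2 (pX x)) with hlam
  have hl0 : 0 ≤ lam := div_nonneg ht0 hH.le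
  have hl1 : lam ≤ 1 := (div_le_one hH).2 htH
  have hlamH : lam * (-∑ x, pX x * Real.logb 2 (pX x)) = t :=
    div_mul_cancel₀ t hHne
  obtain ⟨k, W, hW0, hW1, hIXY, hISY⟩ := witness pX hpX hpX1 c hc0 lam hl0 hl1
  have hmem : lam * (∑ x, ∑ s, pX x * c x s *
      Real.logb 2 ((pX x * c x s) / (pX x * ∑ x', pX x' * c x' s))) ∈
      { r : ℝ | ∃ k : ℕ, ∃ W : α → Fin k → ℝ,
        (∀ x y, 0 ≤ W x y) ∧ (∀ x, ∑ y, W x y = 1) ∧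
        (∑ x, ∑ y, pX x * W x y *
            Real.logb 2 ((pX x * W x y) / (pX x * ∑ x', pX x' * W x' y))) ≥ t ∧
        r = ∑ s, ∑ y, (∑ x, pX x * c x s * W x y) *
            Real.logb 2 ((∑ x, pX x * c x s * W x y) /
              ((∑ x, pX x * c x s) * ∑ x', pX x' * W x' y)) } :=
    ⟨k, W, hW0, hW1, by rw [hIXY, hlamH], hISY.symm⟩
  have hbdd : BddBelow { r : ℝ | ∃ k : ℕ, ∃ W : α → Fin k → ℝ,
        (∀ x y, 0 ≤ W x y) ∧ (∀ x, ∑ y, W x y = 1) ∧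
        (∑ x, ∑ y, pX x * W x y *
            Real.logb 2 ((pX x * W x y) / (pX x * ∑ x', pX x' * W x' y))) ≥ t ∧
        r = ∑ s, ∑ y, (∑ x, pX x * c x s * W x y) *
            Real.logb 2 ((∑ x, pX x * c x s * W x y) /
              ((∑ x, pX x * c x s) * ∑ x', pX x' * W x' y)) } := by
    refine ⟨0, fun r hr => ?_⟩
    obtain ⟨k', W', h0, h1, _, rfl⟩ := hr
    exact ISY_nonneg pX hpX hpX1 c hc0 hc1 W' h0 h1
  constructor
  · rw [privacyFunnel]
    apply le_csInf ⟨_, hmem⟩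
    rintro r ⟨k', W', h0, h1, hI, rfl⟩
    apply max_le
    · have hkey := key_lower pX hpX c hc0 hc1 W' h0 h1
      linarith
    · exact ISY_nonneg pX hpX hpX1 c hc0 hc1 W' h0 h1
  · rw [privacyFunnel]
    have hle := csInf_le hbdd hmem
    calc sInf _ ≤ lam * (∑ x, ∑ s, pX x * c x s *
        Real.logb 2 ((pX x * c x s) / (pX x * ∑ x', pX x' * c x' s))) := hle
      _ = t * (∑ x, ∑ s, pX x * c x s *
            Real.logb 2 ((pX x * c x s) / (pX x * ∑ x', pX x' * c x' s))) /
          (-∑ x, pX x * Real.logb 2 (pX x)) := by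
          rw [hlam, div_mul_eq_mul_div]
end
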